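/- For every even positive integer d, the quantity 1/2 + 2^{−(d+1)}·C(d, d/2) lies between 1/2 + (1/√(2πd))·(1 − 1/(3d)) and 1/2 + 1/√(2πd). -/

import Mathlib

/-!
Write `s m = m! / (√(2m) (m/e)^m)` for Mathlib's `Stirling.stirlingSeq`. Then
`C(2n, n) / 4^n = s(2n) / (s(n)^2 √n)`, and `s` decreases to `√π` for `m ≥ 1`, while Robbins'
bound `log s(m) - log s(m+1) ≤ 1/(12m) - 1/(12(m+1))` telescopes to `s(n) ≤ √π e^{1/(12n)}`.
Hence `√π s(2n) / s(n)^2` lies between `e^{-1/(6n)} ≥ 1 - 1/(6n)` and `1`, which is the claim for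
`d = 2n`.
-/

open Real Filter Topology Nat

namespace Stirling

theorem stirlingSeq_pos {n : ℕ} (hn : n ≠ 0) : 0 < stirlingSeq n :=
  (sqrt_pos.2 pi_pos).trans_le (sqrt_pi_le_stirlingSeq hn)

theorem stirlingSeq_two_mul_le (n : ℕ) : stirlingSeq (2 * n) ≤ stirlingSeq n := by
  rcases n with _ | k
  · simp
  exact stirlingSeq'_antitone (show k ≤ 2 * k + 1 by omega)

theorem monotone_log_stirlingSeq_succ_sub :
    Monotone fun k : ℕ ↦ log (stirlingSeq (k + 1)) - 1 / (12 * (k + 1 : ℝ)) := by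
  refine monotone_nat_of_le_succ fun k ↦ ?_
  have h := log_stirlingSeq_sdiff_le (k + 1)
  have htelescope : (1 : ℝ) / (12 * (k + 1) * (k + 1 + 1)) =
      1 / (12 * (k + 1)) - 1 / (12 * (k + 1 + 1)) := by
    field_simp; ring
  push_cast at h ⊢
  linarith

theorem stirlingSeq_le_sqrt_pi_mul_exp {n : ℕ} (hn : n ≠ 0) :
    stirlingSeq n ≤ √π * exp (1 / (12 * n)) := by
  obtain ⟨k, rfl⟩ := exists_eq_succ_of_ne_zero hn
  have hlim : Tendsto (fun k : ℕ ↦ log (stirlingSeq (k + 1)) - 1 / (12 * (k + 1 : ℝ))) atTop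
      (𝓝 (log √π - 0)) := by
    refine ((tendsto_stirlingSeq_sqrt_pi.comp (tendsto_add_atTop_nat 1)).log ?_).sub ?_
    · exact (sqrt_pos.2 pi_pos).ne'
    · exact tendsto_const_nhds.div_atTop <| (tendsto_atTop_add_const_right _ 1
        tendsto_natCast_atTop_atTop).const_mul_atTop (by norm_num)
  have hk := monotone_log_stirlingSeq_succ_sub.ge_of_tendsto hlim k
  rw [← log_le_log_iff (stirlingSeq'_pos k) (by positivity),
    log_mul (by positivity) (exp_ne_zero _), log_exp]
  push_cast
  linarith

theorem factorial_eq_stirlingSeq_mul {n : ℕ} (hn : n ≠ 0) :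
    (n ! : ℝ) = stirlingSeq n * (√(2 * n) * (n / exp 1) ^ n) := by
  rw [stirlingSeq, div_mul_cancel₀]
  positivity

theorem centralBinom_div_four_pow_eq {n : ℕ} (hn : n ≠ 0) :
    (n.centralBinom : ℝ) / 4 ^ n = stirlingSeq (2 * n) / stirlingSeq n ^ 2 / √n := by
  have hfact : (n.centralBinom : ℝ) * n ! ^ 2 = (2 * n)! := by
    rw [sq, ← mul_assoc, centralBinom, two_mul]
    exact_mod_cast n.add_choose_mul_factorial_mul_factorial n
  have hsqrt : √(2 * (2 * n : ℕ)) = 2 * √n := by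
    push_cast
    rw [show (2 : ℝ) * (2 * n) = 2 ^ 2 * n by ring, sqrt_mul (by positivity), sqrt_sq zero_le_two]
  have hpow : ((2 * n : ℕ) / exp 1) ^ (2 * n) = 4 ^ n * ((n / exp 1) ^ n) ^ 2 := by
    push_cast
    rw [mul_div_assoc, mul_pow, pow_mul, pow_mul' _ 2 n]
    norm_num
  rw [factorial_eq_stirlingSeq_mul hn, factorial_eq_stirlingSeq_mul (by omega), hsqrt, hpow]
    at hfact
  set X := (n / exp 1 : ℝ) ^ n
  have hX : 0 < 2 * √n * X ^ 2 := by positivity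
  have hn_sq : √(n : ℝ) ^ 2 = n := sq_sqrt n.cast_nonneg
  have htwo_n_sq : √(2 * n : ℝ) ^ 2 = 2 * n := sq_sqrt (by positivity)
  have key : n.centralBinom * (stirlingSeq n ^ 2 * √n) = stirlingSeq (2 * n) * 4 ^ n := by
    refine mul_right_cancel₀ hX.ne' ?_
    linear_combination hfact + 2 * n.centralBinom * stirlingSeq n ^ 2 * X ^ 2 * hn_sq
      - n.centralBinom * stirlingSeq n ^ 2 * X ^ 2 * htwo_n_sq
  have hs := (stirlingSeq_pos hn).ne'
  field_simp
  linear_combination key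

theorem stirlingSeq_two_mul_div_sq_le {n : ℕ} (hn : n ≠ 0) :
    stirlingSeq (2 * n) / stirlingSeq n ^ 2 ≤ 1 / √π := by
  have hs := stirlingSeq_pos hn
  calc stirlingSeq (2 * n) / stirlingSeq n ^ 2 ≤ stirlingSeq n / stirlingSeq n ^ 2 := by
        gcongr; exact stirlingSeq_two_mul_le n
    _ = 1 / stirlingSeq n := by field_simp
    _ ≤ 1 / √π := by gcongr; exact sqrt_pi_le_stirlingSeq hn

theorem exp_neg_div_le_stirlingSeq_two_mul_div_sq {n : ℕ} (hn : n ≠ 0) :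
    exp (-(1 / (6 * n))) / √π ≤ stirlingSeq (2 * n) / stirlingSeq n ^ 2 := by
  have hsq : (√π * exp (1 / (12 * n))) ^ 2 = π * exp (1 / (6 * n)) := by
    rw [mul_pow, sq_sqrt pi_pos.le, ← exp_nat_mul]
    congr 2
    field_simp
    norm_num
  calc exp (-(1 / (6 * n))) / √π = √π / (√π * exp (1 / (12 * n))) ^ 2 := by
        rw [hsq, exp_neg]
        have hπ := sqrt_pos.2 pi_pos
        field_simp
        rw [sq_sqrt pi_pos.le]
    _ ≤ stirlingSeq (2 * n) / stirlingSeq n ^ 2 :=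
        div_le_div₀ (stirlingSeq_pos (by omega)).le (sqrt_pi_le_stirlingSeq (by omega))
          (pow_pos (stirlingSeq_pos hn) 2)
          (pow_le_pow_left₀ (stirlingSeq_pos hn).le (stirlingSeq_le_sqrt_pi_mul_exp hn) 2)

theorem centralBinom_div_four_pow_le {n : ℕ} (hn : n ≠ 0) :
    (n.centralBinom : ℝ) / 4 ^ n ≤ 1 / √(π * n) := by
  rw [centralBinom_div_four_pow_eq hn, sqrt_mul pi_pos.le, ← div_div]
  gcongr ?_ / _
  exact stirlingSeq_two_mul_div_sq_le hn

theorem one_sub_div_le_centralBinom_div_four_pow {n : ℕ} (hn : n ≠ 0) :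
    (1 - 1 / (6 * n)) / √(π * n) ≤ (n.centralBinom : ℝ) / 4 ^ n := by
  rw [centralBinom_div_four_pow_eq hn, sqrt_mul pi_pos.le, ← div_div]
  gcongr ?_ / _
  calc (1 - 1 / (6 * n)) / √π ≤ exp (-(1 / (6 * n))) / √π := by
        gcongr; linarith [add_one_le_exp (-(1 / (6 * n : ℝ)))]
    _ ≤ _ := exp_neg_div_le_stirlingSeq_two_mul_div_sq hn

end Stirling

open Stirling in
theorem half_add_centralBinom_bounds (d : ℕ) (hd : 0 < d) (hev : Even d) :
    1 / 2 + 1 / Real.sqrt (2 * Real.pi * d) * (1 - 1 / (3 * d))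
      ≤ 1 / 2 + (Nat.choose d (d / 2) : ℝ) / 2 ^ (d + 1) ∧
    1 / 2 + (Nat.choose d (d / 2) : ℝ) / 2 ^ (d + 1)
      ≤ 1 / 2 + 1 / Real.sqrt (2 * Real.pi * d) := by
  obtain ⟨n, rfl⟩ := even_iff_two_dvd.1 hev
  have hn : n ≠ 0 := by omega
  have hchoose : (2 * n).choose (2 * n / 2) = n.centralBinom := by
    rw [Nat.mul_div_cancel_left _ two_pos, centralBinom_eq_two_mul_choose]
  have hhalf : (n.centralBinom : ℝ) / 2 ^ (2 * n + 1) = n.centralBinom / 4 ^ n / 2 := by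
    rw [pow_succ, pow_mul]
    norm_num [div_div]
  have hsqrt : √(2 * π * (2 * n : ℕ)) = 2 * √(π * n) := by
    push_cast
    rw [show 2 * π * (2 * n) = 2 ^ 2 * (π * n) by ring, sqrt_mul (by positivity),
      sqrt_sq zero_le_two]
  have hthird : (1 : ℝ) / (3 * (2 * n : ℕ)) = 1 / (6 * n) := by push_cast; ring
  have hlower := one_sub_div_le_centralBinom_div_four_pow hn
  have hupper := centralBinom_div_four_pow_le hn
  rw [hchoose, hhalf, hsqrt, hthird]
  constructor
  · linarith [show 1 / (2 * √(π * n)) * (1 - 1 / (6 * n)) = (1 - 1 / (6 * n)) / √(π * n) / 2 by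
      ring]
  · linarith [show 1 / (2 * √(π * n)) = 1 / √(π * n) / 2 by ring]
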